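/- arXiv:2512.08178 — 4 statements merged into one kernel-verified Lean document; each statement's English description precedes it below -/
import Mathlib

section
/- Let n ≥ 1 and let p_0, …, p_{n−1} be real polynomials with deg p_k = k that are orthonormal for the Gaussian weight: ∫_ℝ p_j(x) p_k(x) e^{−x²} dx = δ_{jk} for all 0 ≤ j,k ≤ n−1. Then for every s ∈ ℝ the GUE largest-eigenvalue CDF admits the finite-determinant (Gram) representation F_n(s) = det(I_n − G(s)), where G(s) is the n×n matrix with entries G(s)_{jk} = ∫_s^∞ p_j(x) p_k(x) e^{−x²} dx. -/
open MeasureTheory Filter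
open Nat

/-- The (unnormalized) GUE eigenvalue density with weight `e^{-x^2}`:
`∏_{i<j} (x_i - x_j)^2 · ∏_i e^{-x_i^2}`. -/
noncomputable def gueDensity (n : ℕ) (x : Fin n → ℝ) : ℝ :=
  (∏ i : Fin n, ∏ j ∈ Finset.Ioi i, (x i - x j) ^ 2) *
    ∏ i : Fin n, Real.exp (-(x i) ^ 2)

/-- The GUE normalization constant `Z_n`. -/
noncomputable def gueZ (n : ℕ) : ℝ := ∫ x : Fin n → ℝ, gueDensity n x

/-- The GUE largest-eigenvalue CDF
`F_n(s) = Z_n⁻¹ ∫_{(-∞,s]^n} ∏_{i<j}(x_i-x_j)^2 ∏ e^{-x_i^2} dx`. -/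
noncomputable def gueF (n : ℕ) (s : ℝ) : ℝ :=
  (∫ x in {x : Fin n → ℝ | ∀ i, x i ≤ s}, gueDensity n x) / gueZ n

/-- The logarithmic derivative `σ_n(s) = (d/ds) log F_n(s)`. -/
noncomputable def gueSigma (n : ℕ) (s : ℝ) : ℝ :=
  deriv (fun t => Real.log (gueF n t)) s

local notation "ε " σ:arg => ((Equiv.Perm.sign σ : ℤ) : ℝ)

lemma integrable_pow_mul_gauss (n : ℕ) :
    Integrable (fun x : ℝ => x ^ n * Real.exp (-x ^ 2)) := by
  have hmeas : AEStronglyMeasurable (fun x : ℝ => x ^ n * Real.exp (-x ^ 2)) volume :=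
    ((continuous_pow n).mul ((continuous_pow 2).neg.rexp)).aestronglyMeasurable
  refine Integrable.mono' ((integrable_exp_neg_mul_sq (by norm_num : (0:ℝ) < 1/2)).const_mul
    (Real.exp ((n : ℝ) ^ 2 / 2))) hmeas (Filter.Eventually.of_forall fun x => ?_)
  have h1 : |x| ^ n ≤ Real.exp ((n : ℝ) * |x|) := by
    calc |x| ^ n ≤ Real.exp |x| ^ n := by
          exact pow_le_pow_left₀ (abs_nonneg x) ((Real.add_one_le_exp |x|).trans'
            (by linarith [abs_nonneg x])) n
      _ = Real.exp ((n : ℝ) * |x|) := by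
          rw [← Real.exp_nat_mul]
  have h2 : (n : ℝ) * |x| - x ^ 2 ≤ (n : ℝ) ^ 2 / 2 - (1/2) * x ^ 2 := by
    nlinarith [sq_nonneg (|x| - (n : ℝ)), sq_abs x]
  rw [Real.norm_eq_abs, abs_mul, abs_pow, abs_of_nonneg (Real.exp_pos _).le]
  calc |x| ^ n * Real.exp (-x ^ 2) ≤ Real.exp ((n:ℝ) * |x|) * Real.exp (-x ^ 2) := by
        exact mul_le_mul_of_nonneg_right h1 (Real.exp_pos _).le
    _ = Real.exp ((n:ℝ) * |x| - x ^ 2) := by rw [← Real.exp_add]; ring_nf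
    _ ≤ Real.exp ((n : ℝ) ^ 2 / 2) * Real.exp (-(1/2) * x ^ 2) := by
        rw [← Real.exp_add]
        exact Real.exp_le_exp.2 (by linarith)

lemma integrable_poly_gauss (q : Polynomial ℝ) :
    Integrable (fun x : ℝ => q.eval x * Real.exp (-x ^ 2)) := by
  have : (fun x : ℝ => q.eval x * Real.exp (-x ^ 2)) =
      fun x => ∑ i ∈ Finset.range (q.natDegree + 1), q.coeff i * (x ^ i * Real.exp (-x ^ 2)) := by
    funext x
    rw [Polynomial.eval_eq_sum_range, Finset.sum_mul]
    simp [mul_assoc]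
  rw [this]
  exact integrable_finset_sum _ fun i _ => (integrable_pow_mul_gauss i).const_mul _

lemma andreief {n : ℕ} (f g : Fin n → ℝ → ℝ)
    (h : ∀ j k, Integrable (fun x => f j x * g k x)) :
    (∫ x : Fin n → ℝ, Matrix.det (Matrix.of fun i j => f j (x i)) *
        Matrix.det (Matrix.of fun i j => g j (x i))) =
      (n ! : ℝ) * Matrix.det (Matrix.of fun j k => ∫ x : ℝ, f j x * g k x) := by
  classical
  have hterm : ∀ σ τ : Equiv.Perm (Fin n),
      Integrable (fun x : Fin n → ℝ =>
        (ε σ * ε τ) * ∏ i, (f (σ⁻¹ i) (x i) * g (τ⁻¹ i) (x i))) :=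
    fun σ τ => (Integrable.fintype_prod (fun i => h (σ⁻¹ i) (τ⁻¹ i))).const_mul _
  have key : ∀ x : Fin n → ℝ,
      Matrix.det (Matrix.of fun i j => f j (x i)) * Matrix.det (Matrix.of fun i j => g j (x i)) =
      ∑ σ : Equiv.Perm (Fin n), ∑ τ : Equiv.Perm (Fin n),
        (ε σ * ε τ) * ∏ i, (f (σ⁻¹ i) (x i) * g (τ⁻¹ i) (x i)) := by
    intro x
    rw [Matrix.det_apply', Matrix.det_apply', Finset.sum_mul_sum]
    refine Finset.sum_congr rfl fun σ _ => Finset.sum_congr rfl fun τ _ => ?_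
    have e1 : ∏ i, f (σ⁻¹ i) (x i) = ∏ i, f i (x (σ i)) := by
      rw [← Equiv.prod_comp σ (fun i => f (σ⁻¹ i) (x i))]
      simp
    have e2 : ∏ i, g (τ⁻¹ i) (x i) = ∏ i, g i (x (τ i)) := by
      rw [← Equiv.prod_comp τ (fun i => g (τ⁻¹ i) (x i))]
      simp
    simp only [Matrix.of_apply]
    rw [Finset.prod_mul_distrib, e1, e2]
    ring
  have step1 : (∫ x : Fin n → ℝ, Matrix.det (Matrix.of fun i j => f j (x i)) *
        Matrix.det (Matrix.of fun i j => g j (x i))) =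
      ∑ σ : Equiv.Perm (Fin n), ∑ τ : Equiv.Perm (Fin n),
        (ε σ * ε τ) * ∏ i, ∫ y : ℝ, f (σ⁻¹ i) y * g (τ⁻¹ i) y := by
    rw [show (fun x : Fin n → ℝ => Matrix.det (Matrix.of fun i j => f j (x i)) *
        Matrix.det (Matrix.of fun i j => g j (x i))) = fun x =>
        ∑ σ : Equiv.Perm (Fin n), ∑ τ : Equiv.Perm (Fin n),
          (ε σ * ε τ) * ∏ i, (f (σ⁻¹ i) (x i) * g (τ⁻¹ i) (x i)) from funext key]
    rw [integral_finset_sum _ fun σ _ => integrable_finset_sum _ fun τ _ => hterm σ τ]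
    refine Finset.sum_congr rfl fun σ _ => ?_
    rw [integral_finset_sum _ fun τ _ => hterm σ τ]
    refine Finset.sum_congr rfl fun τ _ => ?_
    rw [integral_const_mul, integral_fintype_prod_volume_eq_prod
      (f := fun i (y : ℝ) => f (σ⁻¹ i) y * g (τ⁻¹ i) y)]
  rw [step1]
  set A : Matrix (Fin n) (Fin n) ℝ := Matrix.of fun j k => ∫ x : ℝ, f j x * g k x with hA
  have hAe : ∀ j k, (∫ x : ℝ, f j x * g k x) = A j k := fun j k => rfl
  calc
    ∑ σ : Equiv.Perm (Fin n), ∑ τ : Equiv.Perm (Fin n),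
        (ε σ * ε τ) * ∏ i, ∫ y : ℝ, f (σ⁻¹ i) y * g (τ⁻¹ i) y
      = ∑ σ : Equiv.Perm (Fin n), ∑ τ : Equiv.Perm (Fin n),
        (ε σ * ε τ) * ∏ i, A (σ i) (τ i) := by
        refine Finset.sum_equiv (Equiv.inv (Equiv.Perm (Fin n))) (by simp) (fun σ _ => ?_)
        refine Finset.sum_equiv (Equiv.inv (Equiv.Perm (Fin n))) (by simp) (fun τ _ => ?_)
        simp only [hAe, Equiv.inv_apply, Equiv.Perm.sign_inv, inv_inv]
    _ = ∑ σ : Equiv.Perm (Fin n), ∑ ρ : Equiv.Perm (Fin n),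
        ε ρ * ∏ i, A i (ρ i) := by
        refine Finset.sum_congr rfl fun σ _ => ?_
        refine Finset.sum_equiv (Equiv.mulRight σ⁻¹) (by simp) (fun τ _ => ?_)
        have hp : ∏ i, A i ((τ * σ⁻¹) i) = ∏ i, A (σ i) (τ i) := by
          rw [← Equiv.prod_comp σ (fun i => A i ((τ * σ⁻¹) i))]
          simp [Equiv.Perm.mul_apply]
        simp only [Equiv.coe_mulRight, hp]
        rw [map_mul, Equiv.Perm.sign_inv]
        push_cast
        ring
    _ = ∑ _σ : Equiv.Perm (Fin n), A.transpose.det := by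
        refine Finset.sum_congr rfl fun σ _ => ?_
        rw [Matrix.det_apply']
        exact Finset.sum_congr rfl fun ρ _ => by simp [Matrix.transpose_apply]
    _ = (n ! : ℝ) * A.det := by
        rw [Finset.sum_const, Finset.card_univ, Fintype.card_perm, Fintype.card_fin,
          Matrix.det_transpose, nsmul_eq_mul]

lemma det_sq_eq (n : ℕ) (p : Fin n → Polynomial ℝ)
    (hdeg : ∀ k : Fin n, (p k).natDegree = (k : ℕ)) (x : Fin n → ℝ) :
    (Matrix.det (Matrix.of fun i j : Fin n =>
        (p j).eval (x i) * Real.exp (-(x i) ^ 2 / 2))) ^ 2 =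
      (∏ k : Fin n, (p k).leadingCoeff) ^ 2 *
        ((∏ i : Fin n, ∏ j ∈ Finset.Ioi i, (x i - x j) ^ 2) *
          ∏ i : Fin n, Real.exp (-(x i) ^ 2)) := by
  have h1 : (Matrix.of fun i j : Fin n => (p j).eval (x i) * Real.exp (-(x i) ^ 2 / 2)) =
      Matrix.of fun i j : Fin n =>
        Real.exp (-(x i) ^ 2 / 2) * (Matrix.of fun i j : Fin n => (p j).eval (x i)) i j := by
    ext i j; simp [mul_comm]
  rw [h1, Matrix.det_mul_column]
  have h2 : (Matrix.of fun i j : Fin n => (p j).eval (x i)).det =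
      (Matrix.vandermonde x).det * ∏ k : Fin n, (p k).leadingCoeff := by
    rw [Matrix.eval_matrixOfPolynomials_eq_vandermonde_mul_matrixOfPolynomials x p
        (fun i => (hdeg i).le), Matrix.det_mul,
      Matrix.det_of_upperTriangular
        (Matrix.matrixOfPolynomials_blockTriangular p (fun i => (hdeg i).le))]
    congr 1
    refine Finset.prod_congr rfl fun k _ => ?_
    rw [Matrix.of_apply, show ((k : ℕ)) = (p k).natDegree from (hdeg k).symm,
      Polynomial.coeff_natDegree]
  rw [h2, Matrix.det_vandermonde]
  have e1 : (∏ i : Fin n, Real.exp (-(x i) ^ 2 / 2)) ^ 2 =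
      ∏ i : Fin n, Real.exp (-(x i) ^ 2) := by
    rw [← Finset.prod_pow]
    refine Finset.prod_congr rfl fun i _ => ?_
    rw [sq, ← Real.exp_add]
    congr 1; ring
  have e2 : (∏ i : Fin n, ∏ j ∈ Finset.Ioi i, (x j - x i)) ^ 2 =
      ∏ i : Fin n, ∏ j ∈ Finset.Ioi i, (x i - x j) ^ 2 := by
    rw [← Finset.prod_pow]
    refine Finset.prod_congr rfl fun i _ => ?_
    rw [← Finset.prod_pow]
    exact Finset.prod_congr rfl fun j _ => by ring
  rw [mul_pow, mul_pow, e1, e2]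
  ring

/-- Gram (finite-determinant) representation of the GUE largest-eigenvalue CDF: if
`p_0, …, p_{n-1}` are polynomials with `deg p_k = k`, orthonormal for the Gaussian weight
`e^{-x²}`, then `F_n(s) = det(I_n - G(s))`, where
`G(s)_{jk} = ∫_s^∞ p_j(x) p_k(x) e^{-x²} dx`. -/
theorem gueF_eq_det_one_sub_gram (n : ℕ) (hn : 1 ≤ n)
    (p : Fin n → Polynomial ℝ)
    (hdeg : ∀ k : Fin n, (p k).natDegree = (k : ℕ))
    (horth : ∀ j k : Fin n,
      (∫ x : ℝ, (p j).eval x * (p k).eval x * Real.exp (-x ^ 2)) =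
        if j = k then 1 else 0)
    (s : ℝ) :
    gueF n s =
      Matrix.det
        ((1 : Matrix (Fin n) (Fin n) ℝ) -
          Matrix.of fun j k : Fin n =>
            ∫ x in Set.Ici s, (p j).eval x * (p k).eval x * Real.exp (-x ^ 2)) := by
  classical
  set c : ℝ := ∏ k : Fin n, (p k).leadingCoeff with hc
  have hp0 : ∀ k, p k ≠ 0 := by
    intro k hk
    have h := horth k k
    rw [hk] at h
    simp at h
  have hcne : c ≠ 0 :=
    Finset.prod_ne_zero_iff.2 fun k _ => Polynomial.leadingCoeff_ne_zero.2 (hp0 k)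
  set fR : Fin n → ℝ → ℝ := fun j y => (p j).eval y * Real.exp (-y ^ 2 / 2) with hfR
  set fS : Fin n → ℝ → ℝ := fun j => (Set.Iic s).indicator (fR j) with hfS
  have hprod : ∀ j k : Fin n, (fun y => fR j y * fR k y) =
      fun y => (p j).eval y * (p k).eval y * Real.exp (-y ^ 2) := by
    intro j k; funext y
    simp only [hfR]
    rw [mul_mul_mul_comm, ← Real.exp_add]
    congr 1
    ring
  have hIntR : ∀ j k, Integrable (fun y => fR j y * fR k y) := by
    intro j k
    rw [hprod j k]
    have : (fun y : ℝ => (p j).eval y * (p k).eval y * Real.exp (-y ^ 2)) =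
        fun y => (p j * p k).eval y * Real.exp (-y ^ 2) := by
      funext y; rw [Polynomial.eval_mul]
    rw [this]
    exact integrable_poly_gauss _
  have hIntS : ∀ j k, Integrable (fun y => fS j y * fS k y) := by
    intro j k
    have he : (fun y => fS j y * fS k y) =
        (Set.Iic s).indicator (fun y => fR j y * fR k y) := by
      funext y
      by_cases hy : y ∈ Set.Iic s <;>
        simp [hfS, Set.indicator_of_mem, Set.indicator_of_notMem, hy]
    rw [he]
    exact (hIntR j k).indicator measurableSet_Iic
  have hdet : ∀ x : Fin n → ℝ,
      (Matrix.det (Matrix.of fun i j => fR j (x i))) ^ 2 = c ^ 2 * gueDensity n x :=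
    fun x => det_sq_eq n p hdeg x
  have hgue : ∀ x : Fin n → ℝ, gueDensity n x =
      (c ^ 2)⁻¹ * ((Matrix.det (Matrix.of fun i j => fR j (x i))) *
        (Matrix.det (Matrix.of fun i j => fR j (x i)))) := by
    intro x
    rw [← sq, hdet x, inv_mul_cancel_left₀ (pow_ne_zero 2 hcne)]
  have hone : (Matrix.of fun j k : Fin n => ∫ y : ℝ, fR j y * fR k y) = 1 := by
    ext j k
    rw [Matrix.of_apply, show (∫ y : ℝ, fR j y * fR k y) =
      ∫ y : ℝ, (p j).eval y * (p k).eval y * Real.exp (-y ^ 2) from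
        congrArg _ (hprod j k), horth j k, Matrix.one_apply]
  have hZ : gueZ n = (c ^ 2)⁻¹ * (n ! : ℝ) := by
    rw [gueZ, show (fun x : Fin n → ℝ => gueDensity n x) = fun x =>
        (c ^ 2)⁻¹ * ((Matrix.det (Matrix.of fun i j => fR j (x i))) *
          (Matrix.det (Matrix.of fun i j => fR j (x i)))) from funext hgue,
      integral_const_mul, andreief fR fR hIntR, hone, Matrix.det_one, mul_one]
  set S : Set (Fin n → ℝ) := {x : Fin n → ℝ | ∀ i, x i ≤ s} with hS
  have hSmeas : MeasurableSet S := by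
    have : S = Set.pi Set.univ (fun _ : Fin n => Set.Iic s) := by
      ext x; simp only [hS, Set.mem_setOf_eq, Set.mem_univ_pi, Set.mem_Iic]
    rw [this]
    exact MeasurableSet.univ_pi fun i => measurableSet_Iic
  have hind : ∀ x : Fin n → ℝ, S.indicator (gueDensity n) x =
      (c ^ 2)⁻¹ * ((Matrix.det (Matrix.of fun i j => fS j (x i))) *
        (Matrix.det (Matrix.of fun i j => fS j (x i)))) := by
    intro x
    by_cases hx : x ∈ S
    · rw [Set.indicator_of_mem hx]
      have hx' : ∀ i, x i ≤ s := hx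
      have he : (Matrix.of fun i j => fS j (x i)) =
          (Matrix.of fun i j : Fin n => fR j (x i)) := by
        ext i j
        simp only [Matrix.of_apply, hfS]
        exact Set.indicator_of_mem (Set.mem_Iic.2 (hx' i)) _
      rw [he, hgue x]
    · rw [Set.indicator_of_notMem hx]
      obtain ⟨i, hi⟩ := not_forall.1 hx
      have hrow : ∀ j, (Matrix.of fun i j => fS j (x i)) i j = 0 := by
        intro j
        simp only [Matrix.of_apply, hfS]
        exact Set.indicator_of_notMem (by simpa using hi) _
      rw [Matrix.det_eq_zero_of_row_eq_zero i hrow]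
      ring
  have hNum : (∫ x in S, gueDensity n x) =
      (c ^ 2)⁻¹ * ((n ! : ℝ) *
        Matrix.det (Matrix.of fun j k : Fin n => ∫ y : ℝ, fS j y * fS k y)) := by
    rw [← integral_indicator hSmeas,
      show (fun x : Fin n → ℝ => S.indicator (gueDensity n) x) = fun x =>
        (c ^ 2)⁻¹ * ((Matrix.det (Matrix.of fun i j => fS j (x i))) *
          (Matrix.det (Matrix.of fun i j => fS j (x i)))) from funext hind,
      integral_const_mul, andreief fS fS hIntS]
  have hM : (Matrix.of fun j k : Fin n => ∫ y : ℝ, fS j y * fS k y) =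
      (1 : Matrix (Fin n) (Fin n) ℝ) -
        Matrix.of fun j k : Fin n =>
          ∫ x in Set.Ici s, (p j).eval x * (p k).eval x * Real.exp (-x ^ 2) := by
    ext j k
    simp only [Matrix.of_apply, Matrix.sub_apply, Matrix.one_apply]
    have h1 : (∫ y : ℝ, fS j y * fS k y) =
        ∫ y in Set.Iic s, (p j).eval y * (p k).eval y * Real.exp (-y ^ 2) := by
      have he : (fun y => fS j y * fS k y) =
          (Set.Iic s).indicator (fun y => (p j).eval y * (p k).eval y * Real.exp (-y ^ 2)) := by
        funext y
        by_cases hy : y ∈ Set.Iic s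
        · rw [Set.indicator_of_mem hy]
          simp only [hfS, Set.indicator_of_mem hy]
          exact congrFun (hprod j k) y
        · simp [hfS, Set.indicator_of_notMem, hy]
      rw [he, integral_indicator measurableSet_Iic]
    have hIntOn := (hIntR j k)
    rw [hprod j k] at hIntOn
    have hsplit := intervalIntegral.integral_Iic_add_Ioi (b := s) hIntOn.integrableOn hIntOn.integrableOn
    rw [horth j k] at hsplit
    rw [h1, integral_Ici_eq_integral_Ioi]
    linarith
  rw [gueF, hNum, hM, hZ, ← mul_assoc]
  rw [mul_div_cancel_left₀]
  exact mul_ne_zero (inv_ne_zero (pow_ne_zero 2 hcne))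
    (Nat.cast_ne_zero.2 (Nat.factorial_ne_zero n))
end

section
/- Let N ≥ 1, let α > −1, and let p_0, …, p_{N−1} be real polynomials with deg p_k = k that are orthonormal for the Laguerre weight: ∫_0^∞ p_j(x) p_k(x) x^α e^{−x} dx = δ_{jk} for all 0 ≤ j,k ≤ N−1. Then for every s ≥ 0 the LUE largest-eigenvalue CDF admits the finite-determinant (Gram) representation F_{N,α}(s) = det(I_N − G(s)), where G(s) is the N×N matrix with entries G(s)_{jk} = ∫_s^∞ p_j(x) p_k(x) x^α e^{−x} dx. -/
open MeasureTheory

/-- The (unnormalized) LUE eigenvalue density with weight `x^α e^{-x}`: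
`∏_{i<j} (x_i - x_j)^2 · ∏_i x_i^α e^{-x_i}`. -/
noncomputable def lueDensity (N : ℕ) (α : ℝ) (x : Fin N → ℝ) : ℝ :=
  (∏ i : Fin N, ∏ j ∈ Finset.Ioi i, (x i - x j) ^ 2) *
    ∏ i : Fin N, (x i) ^ α * Real.exp (-(x i))

/-- The LUE normalization constant `Z_{N,α}` (integral over `[0,∞)^N`). -/
noncomputable def lueZ (N : ℕ) (α : ℝ) : ℝ :=
  ∫ x in {x : Fin N → ℝ | ∀ i, 0 ≤ x i}, lueDensity N α x

/-- The LUE largest-eigenvalue CDF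
`F_{N,α}(s) = Z_{N,α}⁻¹ ∫_{[0,s]^N} ∏_{i<j}(x_i-x_j)^2 ∏ x_i^α e^{-x_i} dx`. -/
noncomputable def lueF (N : ℕ) (α : ℝ) (s : ℝ) : ℝ :=
  (∫ x in {x : Fin N → ℝ | ∀ i, x i ∈ Set.Icc 0 s}, lueDensity N α x) / lueZ N α

section Aux

open Equiv

/-- Restriction commutes with finite products of measures. -/
lemma myPiRestrict {N : ℕ} (μ : Measure ℝ) [SigmaFinite μ] (A : Set ℝ) :
    Measure.pi (fun _ : Fin N => μ.restrict A) =
      (Measure.pi fun _ : Fin N => μ).restrict (Set.univ.pi fun _ => A) := by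
  refine Measure.pi_eq fun s hs => ?_
  rw [Measure.restrict_apply (MeasurableSet.univ_pi hs), ← Set.pi_inter_distrib,
    Measure.pi_pi]
  exact Finset.prod_congr rfl fun i _ => (Measure.restrict_apply (hs i)).symm

/-- Integrability of `q(x) x^α e^{-x}` on `(0,∞)` for a polynomial `q` and `α > -1`. -/
lemma myIntegrablePW (α : ℝ) (hα : -1 < α) (q : Polynomial ℝ) :
    IntegrableOn (fun x => q.eval x * (x ^ α * Real.exp (-x))) (Set.Ioi 0) := by
  have hmono : ∀ n : ℕ, IntegrableOn (fun x : ℝ => x ^ n * (x ^ α * Real.exp (-x)))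
      (Set.Ioi 0) := by
    intro n
    have h := Real.GammaIntegral_convergent (s := α + n + 1)
      (by have : (0:ℝ) ≤ n := Nat.cast_nonneg n; linarith)
    refine h.congr_fun (fun x hx => ?_) measurableSet_Ioi
    have hx0 : (0:ℝ) < x := hx
    beta_reduce
    rw [show α + (n:ℝ) + 1 - 1 = α + n by ring, Real.rpow_add hx0, Real.rpow_natCast]
    ring
  have : (fun x : ℝ => q.eval x * (x ^ α * Real.exp (-x))) =
      fun x => ∑ i ∈ Finset.range (q.natDegree + 1),
        q.coeff i * (x ^ i * (x ^ α * Real.exp (-x))) := by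
    funext x
    rw [Polynomial.eval_eq_sum_range, Finset.sum_mul]
    exact Finset.sum_congr rfl fun i _ => by ring
  rw [IntegrableOn, this]
  exact integrable_finset_sum _ fun i _ => ((hmono i)).const_mul _

/-- The determinant of the matrix of orthonormal-polynomial values equals the product of
leading coefficients times the Vandermonde determinant. -/
lemma myDetP {N : ℕ} (p : Fin N → Polynomial ℝ) (hdeg : ∀ k, (p k).natDegree = (k : ℕ))
    (x : Fin N → ℝ) :
    Matrix.det (Matrix.of fun i j : Fin N => (p j).eval (x i)) =
      (∏ k, (p k).leadingCoeff) * ∏ i : Fin N, ∏ j ∈ Finset.Ioi i, (x j - x i) := by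
  have hPV : (Matrix.of fun i j : Fin N => (p j).eval (x i)) =
      (Matrix.vandermonde x) * (Matrix.of fun j k : Fin N => (p k).coeff j) := by
    ext i k
    rw [Matrix.mul_apply]
    simp only [Matrix.of_apply, Matrix.vandermonde_apply]
    rw [Polynomial.eval_eq_sum_range' (lt_of_le_of_lt (le_of_eq (hdeg k)) k.isLt) (x i),
      ← Fin.sum_univ_eq_sum_range]
    exact Finset.sum_congr rfl fun j _ => mul_comm _ _
  have hut : (Matrix.of fun j k : Fin N => (p k).coeff j).BlockTriangular id := by
    intro i j hij
    exact Polynomial.coeff_eq_zero_of_natDegree_lt (by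
      rw [hdeg]; exact_mod_cast hij)
  rw [hPV, Matrix.det_mul, Matrix.det_vandermonde, Matrix.det_of_upperTriangular hut,
    mul_comm]
  congr 1
  exact Finset.prod_congr rfl fun k _ => by
    rw [Polynomial.leadingCoeff, hdeg]; rfl

/-- **Andréief's identity** (Gram form): the integral of the squared determinant of values
times a weight equals `N!` times the determinant of the Gram matrix. -/
lemma myAndreief {E : Type*} [MeasurableSpace E] (μ : Measure E) [SigmaFinite μ]
    (N : ℕ) (f : Fin N → E → ℝ) (w : E → ℝ)
    (hint : ∀ j k : Fin N, Integrable (fun x => f j x * f k x * w x) μ) :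
    (∫ x : Fin N → E, (Matrix.det (Matrix.of fun i j => f j (x i))) ^ 2 * ∏ i, w (x i)
        ∂(Measure.pi fun _ => μ)) =
      (Nat.factorial N : ℝ) *
        Matrix.det (Matrix.of fun j k : Fin N => ∫ x, f j x * f k x * w x ∂μ) := by
  classical
  letI : MeasureSpace E := ⟨μ⟩
  set B : Matrix (Fin N) (Fin N) ℝ := Matrix.of fun j k => ∫ x, f j x * f k x * w x ∂μ with hB
  have hD : ∀ x : Fin N → E, Matrix.det (Matrix.of fun i j => f j (x i)) =
      ∑ σ : Perm (Fin N), ((Perm.sign σ : ℤ) : ℝ) * ∏ i, f (σ i) (x i) := by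
    intro x
    rw [← Matrix.det_transpose, Matrix.det_apply']
    rfl
  have hpt : ∀ x : Fin N → E,
      (Matrix.det (Matrix.of fun i j => f j (x i))) ^ 2 * ∏ i, w (x i) =
      ∑ σ : Perm (Fin N), ∑ τ : Perm (Fin N),
        (((Perm.sign σ : ℤ) : ℝ) * ((Perm.sign τ : ℤ) : ℝ)) *
          ∏ i, (f (σ i) (x i) * f (τ i) (x i) * w (x i)) := by
    intro x
    rw [sq, hD, Finset.sum_mul_sum, Finset.sum_mul]
    refine Finset.sum_congr rfl fun σ _ => ?_
    rw [Finset.sum_mul]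
    refine Finset.sum_congr rfl fun τ _ => ?_
    rw [Finset.prod_mul_distrib, Finset.prod_mul_distrib]
    ring
  have hterm : ∀ σ τ : Perm (Fin N), Integrable
      (fun x : Fin N → E => ∏ i, (f (σ i) (x i) * f (τ i) (x i) * w (x i)))
      (Measure.pi fun _ => μ) :=
    fun σ τ => Integrable.fintype_prod (f := fun i t => f (σ i) t * f (τ i) t * w t)
      (fun i => hint (σ i) (τ i))
  have hsum : ∀ σ τ : Perm (Fin N),
      (∫ x : Fin N → E, ∏ i, (f (σ i) (x i) * f (τ i) (x i) * w (x i))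
          ∂(Measure.pi fun _ => μ)) = ∏ i, B (σ i) (τ i) := by
    intro σ τ
    exact integral_fintype_prod_eq_prod (fun i t => f (σ i) t * f (τ i) t * w t)
  calc (∫ x : Fin N → E, (Matrix.det (Matrix.of fun i j => f j (x i))) ^ 2 * ∏ i, w (x i)
        ∂(Measure.pi fun _ => μ))
      = ∫ x : Fin N → E, ∑ σ : Perm (Fin N), ∑ τ : Perm (Fin N),
          (((Perm.sign σ : ℤ) : ℝ) * ((Perm.sign τ : ℤ) : ℝ)) *
            ∏ i, (f (σ i) (x i) * f (τ i) (x i) * w (x i)) ∂(Measure.pi fun _ => μ) := by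
        exact integral_congr_ae (Filter.Eventually.of_forall hpt)
    _ = ∑ σ : Perm (Fin N), ∑ τ : Perm (Fin N),
          (((Perm.sign σ : ℤ) : ℝ) * ((Perm.sign τ : ℤ) : ℝ)) * ∏ i, B (σ i) (τ i) := by
        rw [integral_finset_sum _ fun σ _ =>
          integrable_finset_sum _ fun τ _ => ((hterm σ τ).const_mul _)]
        refine Finset.sum_congr rfl fun σ _ => ?_
        rw [integral_finset_sum _ fun τ _ => ((hterm σ τ).const_mul _)]
        refine Finset.sum_congr rfl fun τ _ => ?_
        rw [MeasureTheory.integral_const_mul, hsum]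
    _ = ∑ _σ : Perm (Fin N), B.det := by
        refine Finset.sum_congr rfl fun σ _ => ?_
        rw [← Equiv.sum_comp (Equiv.mulRight σ)
          (fun τ => (((Perm.sign σ : ℤ) : ℝ) * ((Perm.sign τ : ℤ) : ℝ)) * ∏ i, B (σ i) (τ i)),
          ← Matrix.det_transpose, Matrix.det_apply']
        refine Finset.sum_congr rfl fun ρ _ => ?_
        have h1 : ∏ i, B (σ i) ((Equiv.mulRight σ ρ) i) = ∏ i, B i (ρ i) := by
          have := Equiv.prod_comp σ (fun j => B j (ρ j))
          simpa [Perm.mul_apply] using this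
        rw [h1]
        have hsgn : ((Perm.sign (Equiv.mulRight σ ρ) : ℤ) : ℝ) =
            ((Perm.sign ρ : ℤ) : ℝ) * ((Perm.sign σ : ℤ) : ℝ) := by
          simp [Equiv.Perm.sign_mul]
        rw [hsgn]
        obtain h | h := Int.units_eq_one_or (Perm.sign σ) <;>
          simp [h, Matrix.det_apply, Matrix.transpose_apply]
    _ = (Nat.factorial N : ℝ) * B.det := by
        rw [Finset.sum_const, Finset.card_univ, Fintype.card_perm, Fintype.card_fin,
          nsmul_eq_mul]

/-- The integral of the LUE density over a box `A^N` in Gram-determinant form. -/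
lemma myDensityInt {N : ℕ} (α : ℝ) (p : Fin N → Polynomial ℝ)
    (hdeg : ∀ k, (p k).natDegree = (k : ℕ))
    (hc : (∏ k, (p k).leadingCoeff) ≠ 0) (A : Set ℝ)
    (hint : ∀ j k : Fin N, IntegrableOn
      (fun x => (p j).eval x * (p k).eval x * (x ^ α * Real.exp (-x))) A) :
    (∫ x, lueDensity N α x ∂(Measure.pi fun _ : Fin N => volume.restrict A)) =
      ((∏ k, (p k).leadingCoeff)⁻¹) ^ 2 * ((Nat.factorial N : ℝ) *
        Matrix.det (Matrix.of fun j k : Fin N =>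
          ∫ x in A, (p j).eval x * (p k).eval x * (x ^ α * Real.exp (-x)))) := by
  have h := myAndreief (volume.restrict A) N (fun j => (p j).eval)
    (fun t => t ^ α * Real.exp (-t)) hint
  have hdens : ∀ x : Fin N → ℝ, lueDensity N α x =
      ((∏ k, (p k).leadingCoeff)⁻¹) ^ 2 *
        ((Matrix.det (Matrix.of fun i j : Fin N => (p j).eval (x i))) ^ 2 *
          ∏ i, (x i) ^ α * Real.exp (-(x i))) := by
    intro x
    have hV : (∏ i : Fin N, ∏ j ∈ Finset.Ioi i, (x i - x j) ^ 2) =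
        (∏ i : Fin N, ∏ j ∈ Finset.Ioi i, (x j - x i)) ^ 2 := by
      rw [← Finset.prod_pow]
      refine Finset.prod_congr rfl fun i _ => ?_
      rw [← Finset.prod_pow]
      exact Finset.prod_congr rfl fun j _ => by ring
    unfold lueDensity
    rw [hV, myDetP p hdeg x, mul_pow]
    field_simp
  rw [integral_congr_ae (Filter.Eventually.of_forall hdens), integral_const_mul, h]

end Aux

/-- Gram (finite-determinant) representation of the LUE largest-eigenvalue CDF: if
`p_0, …, p_{N-1}` are polynomials with `deg p_k = k`, orthonormal for the Laguerre weight
`x^α e^{-x}` on `(0,∞)`, then for every `s ≥ 0`, `F_{N,α}(s) = det(I_N - G(s))`, where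
`G(s)_{jk} = ∫_s^∞ p_j(x) p_k(x) x^α e^{-x} dx`. -/
theorem lueF_eq_det_one_sub_gram (N : ℕ) (hN : 1 ≤ N) (α : ℝ) (hα : -1 < α)
    (p : Fin N → Polynomial ℝ)
    (hdeg : ∀ k : Fin N, (p k).natDegree = (k : ℕ))
    (horth : ∀ j k : Fin N,
      (∫ x in Set.Ioi (0 : ℝ),
          (p j).eval x * (p k).eval x * (x ^ α * Real.exp (-x))) =
        if j = k then 1 else 0)
    (s : ℝ) (hs : 0 ≤ s) :
    lueF N α s =
      Matrix.det
        ((1 : Matrix (Fin N) (Fin N) ℝ) -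
          Matrix.of fun j k : Fin N =>
            ∫ x in Set.Ici s,
              (p j).eval x * (p k).eval x * (x ^ α * Real.exp (-x))) := by
  classical
  -- integrability of the Gram integrands
  have hint0 : ∀ j k : Fin N, IntegrableOn
      (fun x => (p j).eval x * (p k).eval x * (x ^ α * Real.exp (-x))) (Set.Ioi 0) := by
    intro j k
    simpa [Polynomial.eval_mul] using myIntegrablePW α hα (p j * p k)
  have hIoc : ∀ j k : Fin N, IntegrableOn
      (fun x => (p j).eval x * (p k).eval x * (x ^ α * Real.exp (-x))) (Set.Ioc 0 s) :=
    fun j k => (hint0 j k).mono_set Set.Ioc_subset_Ioi_self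
  have hIoiS : ∀ j k : Fin N, IntegrableOn
      (fun x => (p j).eval x * (p k).eval x * (x ^ α * Real.exp (-x))) (Set.Ioi s) :=
    fun j k => (hint0 j k).mono_set (Set.Ioi_subset_Ioi hs)
  -- nonvanishing of leading coefficients
  have hc : (∏ k, (p k).leadingCoeff) ≠ 0 := by
    refine Finset.prod_ne_zero_iff.mpr fun k _ => ?_
    intro h0
    have hp0 : p k = 0 := Polynomial.leadingCoeff_eq_zero.mp h0
    have h1 := horth k k
    rw [hp0] at h1
    simp at h1
  -- numerator
  have e1 : (∫ x in {x : Fin N → ℝ | ∀ i, x i ∈ Set.Icc 0 s}, lueDensity N α x)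
      = ∫ x, lueDensity N α x ∂(Measure.pi fun _ : Fin N => volume.restrict (Set.Ioc 0 s)) := by
    have hset : {x : Fin N → ℝ | ∀ i, x i ∈ Set.Icc 0 s}
        = Set.univ.pi fun _ : Fin N => Set.Icc 0 s := by
      ext x; simp [Set.mem_pi, Pi.le_def, forall_and]
    have hmeas : (volume : Measure (Fin N → ℝ)).restrict
          (Set.univ.pi fun _ : Fin N => Set.Icc 0 s)
        = Measure.pi fun _ : Fin N => volume.restrict (Set.Ioc 0 s) := by
      rw [volume_pi, ← myPiRestrict]
      exact congrArg Measure.pi (funext fun _ =>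
        (Measure.restrict_congr_set Ioc_ae_eq_Icc).symm)
    rw [hset, hmeas]
  have e2 : lueZ N α
      = ∫ x, lueDensity N α x ∂(Measure.pi fun _ : Fin N => volume.restrict (Set.Ioi 0)) := by
    have hset : {x : Fin N → ℝ | ∀ i, 0 ≤ x i}
        = Set.univ.pi fun _ : Fin N => Set.Ici 0 := by
      ext x; simp [Set.mem_pi, Pi.le_def, forall_and]
    have hmeas : (volume : Measure (Fin N → ℝ)).restrict
          (Set.univ.pi fun _ : Fin N => Set.Ici 0)
        = Measure.pi fun _ : Fin N => volume.restrict (Set.Ioi 0) := by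
      rw [volume_pi, ← myPiRestrict]
      exact congrArg Measure.pi (funext fun _ =>
        (Measure.restrict_congr_set Ioi_ae_eq_Ici).symm)
    rw [lueZ, hset, hmeas]
  have hnum := myDensityInt α p hdeg hc (Set.Ioc 0 s) hIoc
  have hz := myDensityInt α p hdeg hc (Set.Ioi 0) hint0
  -- the Gram matrix over (0,∞) is the identity
  have hone : (Matrix.of fun j k : Fin N =>
      ∫ x in Set.Ioi 0, (p j).eval x * (p k).eval x * (x ^ α * Real.exp (-x)))
      = (1 : Matrix (Fin N) (Fin N) ℝ) := by
    ext j k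
    rw [Matrix.of_apply, horth j k, Matrix.one_apply]
  -- splitting the orthonormality relation
  have hBG : (Matrix.of fun j k : Fin N =>
        ∫ x in Set.Ioc 0 s, (p j).eval x * (p k).eval x * (x ^ α * Real.exp (-x)))
      = (1 : Matrix (Fin N) (Fin N) ℝ) -
          Matrix.of fun j k : Fin N =>
            ∫ x in Set.Ici s, (p j).eval x * (p k).eval x * (x ^ α * Real.exp (-x)) := by
    ext j k
    have hsplit : (∫ x in Set.Ioi 0,
          (p j).eval x * (p k).eval x * (x ^ α * Real.exp (-x)))
        = (∫ x in Set.Ioc 0 s, (p j).eval x * (p k).eval x * (x ^ α * Real.exp (-x)))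
          + ∫ x in Set.Ioi s, (p j).eval x * (p k).eval x * (x ^ α * Real.exp (-x)) := by
      rw [← Set.Ioc_union_Ioi_eq_Ioi hs]
      exact setIntegral_union (Set.Ioc_disjoint_Ioi le_rfl) measurableSet_Ioi
        (hIoc j k) (hIoiS j k)
    have hIci : (∫ x in Set.Ici s,
          (p j).eval x * (p k).eval x * (x ^ α * Real.exp (-x)))
        = ∫ x in Set.Ioi s, (p j).eval x * (p k).eval x * (x ^ α * Real.exp (-x)) :=
      integral_Ici_eq_integral_Ioi
    rw [horth j k] at hsplit
    simp only [Matrix.sub_apply, Matrix.of_apply, Matrix.one_apply, hIci]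
    linarith
  -- put everything together
  rw [lueF, e1, hnum, e2, hz, hone, Matrix.det_one, hBG]
  have hfac : (Nat.factorial N : ℝ) ≠ 0 := Nat.cast_ne_zero.mpr (Nat.factorial_ne_zero N)
  have hcinv : ((∏ k, (p k).leadingCoeff)⁻¹) ^ 2 ≠ 0 := by positivity
  rw [mul_one, mul_div_mul_left _ _ hcinv, mul_div_cancel_left₀ _ hfac]
end

section
/- Let N ≥ 1, let a, b > −1, and let p_0, …, p_{N−1} be real polynomials with deg p_k = k that are orthonormal for the Jacobi weight: ∫_{−1}^1 p_j(x) p_k(x) (1−x)^a (1+x)^b dx = δ_{jk} for all 0 ≤ j,k ≤ N−1. Then for every s ∈ [−1,1] the JUE largest-eigenvalue CDF admits the finite-determinant (Gram) representation F_{N,a,b}(s) = det(I_N − G(s)), where G(s) is the N×N matrix with entries G(s)_{jk} = ∫_s^1 p_j(x) p_k(x) (1−x)^a (1+x)^b dx. -/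
open MeasureTheory

/-- The (unnormalized) JUE eigenvalue density with weight `(1-x)^a (1+x)^b`:
`∏_{i<j} (x_i - x_j)^2 · ∏_i (1-x_i)^a (1+x_i)^b`. -/
noncomputable def jueDensity (N : ℕ) (a b : ℝ) (x : Fin N → ℝ) : ℝ :=
  (∏ i : Fin N, ∏ j ∈ Finset.Ioi i, (x i - x j) ^ 2) *
    ∏ i : Fin N, (1 - x i) ^ a * (1 + x i) ^ b

/-- The JUE normalization constant `Z_{N,a,b}` (integral over `[-1,1]^N`). -/
noncomputable def jueZ (N : ℕ) (a b : ℝ) : ℝ :=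
  ∫ x in {x : Fin N → ℝ | ∀ i, x i ∈ Set.Icc (-1 : ℝ) 1}, jueDensity N a b x

/-- The JUE largest-eigenvalue CDF
`F_{N,a,b}(s) = Z_{N,a,b}⁻¹ ∫_{[-1,s]^N} ∏_{i<j}(x_i-x_j)^2 ∏ (1-x_i)^a (1+x_i)^b dx`. -/
noncomputable def jueF (N : ℕ) (a b : ℝ) (s : ℝ) : ℝ :=
  (∫ x in {x : Fin N → ℝ | ∀ i, x i ∈ Set.Icc (-1 : ℝ) s}, jueDensity N a b x) /
    jueZ N a b

namespace JueAux

lemma meas_w1 {a : ℝ} : Measurable (fun x : ℝ => (1 - x) ^ a) :=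
  (measurable_const.sub measurable_id).pow measurable_const

lemma meas_w2 {b : ℝ} : Measurable (fun x : ℝ => (1 + x) ^ b) :=
  (measurable_const.add measurable_id).pow measurable_const

lemma int_right {b : ℝ} (hb : -1 < b) :
    IntegrableOn (fun x : ℝ => (1 + x) ^ b) (Set.Icc (-1 : ℝ) 0) := by
  have h : IntervalIntegrable (fun x : ℝ => x ^ b) volume 0 1 :=
    intervalIntegral.intervalIntegrable_rpow' hb
  have h2 : IntervalIntegrable (fun x : ℝ => (x + 1) ^ b) volume (-1) 0 := by
    simpa using h.comp_add_right 1
  have h3 : IntegrableOn (fun x : ℝ => (x + 1) ^ b) (Set.Ioc (-1 : ℝ) 0) :=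
    (intervalIntegrable_iff_integrableOn_Ioc_of_le (by norm_num)).mp h2
  rw [integrableOn_Icc_iff_integrableOn_Ioc]
  simpa [add_comm] using h3

lemma int_left {a : ℝ} (ha : -1 < a) :
    IntegrableOn (fun x : ℝ => (1 - x) ^ a) (Set.Icc (0 : ℝ) 1) := by
  have h : IntervalIntegrable (fun x : ℝ => x ^ a) volume 0 1 :=
    intervalIntegral.intervalIntegrable_rpow' ha
  have h2 : IntervalIntegrable (fun x : ℝ => (1 - x) ^ a) volume 0 1 := by
    simpa using (h.comp_sub_left 1).symm
  rw [integrableOn_Icc_iff_integrableOn_Ioc]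
  exact (intervalIntegrable_iff_integrableOn_Ioc_of_le (by norm_num)).mp h2

lemma rpow_bound {t : ℝ} (ht1 : 1 ≤ t) (ht2 : t ≤ 2) :
    ∀ r : ℝ, ‖t ^ r‖ ≤ max ((2:ℝ) ^ r) 1 := by
  intro r
  rw [Real.norm_eq_abs, abs_of_nonneg (Real.rpow_nonneg (by linarith) _)]
  rcases le_or_gt 0 r with h | h
  · exact le_max_of_le_left (Real.rpow_le_rpow (by linarith) ht2 h)
  · exact le_max_of_le_right (Real.rpow_le_one_of_one_le_of_nonpos ht1 h.le)

lemma weight_integrable {a b : ℝ} (ha : -1 < a) (hb : -1 < b) :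
    IntegrableOn (fun x : ℝ => (1 - x) ^ a * (1 + x) ^ b) (Set.Icc (-1 : ℝ) 1) := by
  have hsplit : Set.Icc (-1 : ℝ) 1 = Set.Icc (-1 : ℝ) 0 ∪ Set.Icc (0 : ℝ) 1 := by
    rw [Set.Icc_union_Icc_eq_Icc] <;> norm_num
  rw [hsplit]
  apply IntegrableOn.union
  · apply Integrable.bdd_mul (c := max ((2:ℝ) ^ a) 1) (int_right hb)
      (meas_w1.aestronglyMeasurable.restrict)
    filter_upwards [ae_restrict_mem measurableSet_Icc] with x hx
    exact rpow_bound (by linarith [hx.2]) (by linarith [hx.1]) a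
  · have : IntegrableOn (fun x : ℝ => (1 + x) ^ b * (1 - x) ^ a) (Set.Icc (0:ℝ) 1) := by
      apply Integrable.bdd_mul (c := max ((2:ℝ) ^ b) 1) (int_left ha)
        (meas_w2.aestronglyMeasurable.restrict)
      filter_upwards [ae_restrict_mem measurableSet_Icc] with x hx
      exact rpow_bound (by linarith [hx.1]) (by linarith [hx.2]) b
    simpa [mul_comm] using this

lemma poly_weight_integrable {a b : ℝ} (q : Polynomial ℝ)
    (hw : IntegrableOn (fun x : ℝ => (1 - x) ^ a * (1 + x) ^ b) (Set.Icc (-1 : ℝ) 1)) :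
    IntegrableOn (fun x : ℝ => q.eval x * ((1 - x) ^ a * (1 + x) ^ b))
      (Set.Icc (-1 : ℝ) 1) := by
  obtain ⟨C, hC⟩ := (isCompact_Icc (a := (-1:ℝ)) (b := 1)).exists_bound_of_continuousOn
    (q.continuous.continuousOn)
  apply Integrable.bdd_mul (c := C) hw
    (q.continuous.measurable.aestronglyMeasurable.restrict)
  filter_upwards [ae_restrict_mem measurableSet_Icc] with x hx
  simpa using hC x hx

lemma restrict_pi_box {N : ℕ} (S : Set ℝ) (hS : MeasurableSet S) :
    (volume : Measure (Fin N → ℝ)).restrict (Set.pi Set.univ fun _ => S) =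
      Measure.pi (fun _ : Fin N => volume.restrict S) := by
  refine (Measure.pi_eq (μ := fun _ : Fin N => volume.restrict S) (fun t ht => ?_)).symm
  rw [Measure.restrict_apply (MeasurableSet.univ_pi ht), ← Set.pi_inter_distrib]
  rw [volume_pi, Measure.pi_pi]
  simp_rw [Measure.restrict_apply (ht _)]

lemma integral_pi_prod {N : ℕ} (μ : Measure ℝ) [SigmaFinite μ] (f : Fin N → ℝ → ℝ) :
    ∫ x : Fin N → ℝ, ∏ i, f i (x i) ∂(Measure.pi fun _ => μ) = ∏ i, ∫ x, f i x ∂μ := by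
  letI : MeasureSpace ℝ := ⟨μ⟩
  exact MeasureTheory.integral_fintype_prod_eq_prod (ι := Fin N) f

lemma integrable_pi_prod {N : ℕ} (μ : Measure ℝ) [SigmaFinite μ] (f : Fin N → ℝ → ℝ)
    (hf : ∀ i, Integrable (f i) μ) :
    Integrable (fun x : Fin N → ℝ => ∏ i, f i (x i)) (Measure.pi fun _ => μ) := by
  letI : MeasureSpace ℝ := ⟨μ⟩
  exact MeasureTheory.Integrable.fintype_prod hf

lemma andreief {N : ℕ} (μ : Measure ℝ) [SigmaFinite μ] (f : Fin N → ℝ → ℝ)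
    (hint : ∀ j k, Integrable (fun x => f j x * f k x) μ) :
    ∫ x : Fin N → ℝ, (Matrix.det (Matrix.of fun i j => f j (x i))) ^ 2
        ∂(Measure.pi fun _ => μ) =
      (N.factorial : ℝ) *
        Matrix.det (Matrix.of fun j k : Fin N => ∫ x, f j x * f k x ∂μ) := by
  classical
  set ε : Equiv.Perm (Fin N) → ℝ := fun σ => ((Equiv.Perm.sign σ : ℤ) : ℝ) with hε
  have hεinv : ∀ σ, ε σ⁻¹ = ε σ := by intro σ; simp [hε]
  have hεmul : ∀ σ τ, ε (σ * τ) = ε σ * ε τ := by intro σ τ; simp [hε]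
  have hεsq : ∀ σ, ε σ * ε σ = 1 := by
    intro σ
    rcases Int.units_eq_one_or (Equiv.Perm.sign σ) with h | h <;> simp [hε, h]
  have hdet : ∀ x : Fin N → ℝ,
      Matrix.det (Matrix.of fun i j => f j (x i)) =
        ∑ σ : Equiv.Perm (Fin N), ε σ * ∏ i, f (σ⁻¹ i) (x i) := by
    intro x
    rw [Matrix.det_apply]
    refine Finset.sum_congr rfl fun σ _ => ?_
    have h1 : ∏ i, (Matrix.of fun i j => f j (x i)) (σ i) i = ∏ i, f (σ⁻¹ i) (x i) := by
      rw [← Equiv.prod_comp σ (fun i => f (σ⁻¹ i) (x i))]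
      simp
    rw [h1, Units.smul_def, zsmul_eq_mul]
  have hsq : ∀ x : Fin N → ℝ,
      (Matrix.det (Matrix.of fun i j => f j (x i))) ^ 2 =
        ∑ σ : Equiv.Perm (Fin N), ∑ τ : Equiv.Perm (Fin N),
          (ε σ * ε τ) * ∏ i, (f (σ⁻¹ i) (x i) * f (τ⁻¹ i) (x i)) := by
    intro x
    rw [hdet, sq, Finset.sum_mul_sum]
    refine Finset.sum_congr rfl fun σ _ => Finset.sum_congr rfl fun τ _ => ?_
    rw [Finset.prod_mul_distrib]; ring
  simp_rw [hsq]
  rw [integral_finset_sum]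
  swap
  · intro σ _
    apply integrable_finset_sum
    intro τ _
    exact ((integrable_pi_prod μ _ (fun i => hint _ _)).const_mul _)
  have hswap : ∀ σ : Equiv.Perm (Fin N),
      ∫ x : Fin N → ℝ, (∑ τ : Equiv.Perm (Fin N),
          (ε σ * ε τ) * ∏ i, (f (σ⁻¹ i) (x i) * f (τ⁻¹ i) (x i))) ∂(Measure.pi fun _ => μ) =
        ∑ τ : Equiv.Perm (Fin N),
          (ε σ * ε τ) * ∏ i, ∫ x, f (σ⁻¹ i) x * f (τ⁻¹ i) x ∂μ := by
    intro σ
    rw [integral_finset_sum]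
    swap
    · intro τ _
      exact ((integrable_pi_prod μ _ (fun i => hint _ _)).const_mul _)
    refine Finset.sum_congr rfl fun τ _ => ?_
    rw [integral_const_mul, integral_pi_prod μ (fun i t => f (σ⁻¹ i) t * f (τ⁻¹ i) t)]
  simp_rw [hswap]
  set A : Matrix (Fin N) (Fin N) ℝ := Matrix.of fun j k => ∫ x, f j x * f k x ∂μ with hA
  have hterm : ∀ σ τ : Equiv.Perm (Fin N),
      (ε σ * ε τ) * ∏ i, ∫ x, f (σ⁻¹ i) x * f (τ⁻¹ i) x ∂μ =
        (ε σ * ε τ) * ∏ i, A (σ⁻¹ i) (τ⁻¹ i) := by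
    intro σ τ; rfl
  simp_rw [hterm]
  have step1 : ∑ σ : Equiv.Perm (Fin N), ∑ τ : Equiv.Perm (Fin N),
      (ε σ * ε τ) * ∏ i, A (σ⁻¹ i) (τ⁻¹ i) =
      ∑ σ : Equiv.Perm (Fin N), ∑ τ : Equiv.Perm (Fin N),
      (ε σ * ε τ) * ∏ i, A (σ i) (τ i) := by
    rw [← Equiv.sum_comp (Equiv.inv (Equiv.Perm (Fin N)))
      (fun σ => ∑ τ : Equiv.Perm (Fin N), (ε σ * ε τ) * ∏ i, A (σ i) (τ i))]
    refine Finset.sum_congr rfl fun σ _ => ?_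
    rw [← Equiv.sum_comp (Equiv.inv (Equiv.Perm (Fin N)))
      (fun τ => (ε ((Equiv.inv (Equiv.Perm (Fin N))) σ) * ε τ) *
        ∏ i, A (((Equiv.inv (Equiv.Perm (Fin N))) σ) i) (τ i))]
    refine Finset.sum_congr rfl fun τ _ => ?_
    simp [Equiv.inv_apply, hεinv]
  rw [step1]
  have step2 : ∀ σ : Equiv.Perm (Fin N),
      ∑ τ : Equiv.Perm (Fin N), (ε σ * ε τ) * ∏ i, A (σ i) (τ i) = Matrix.det A := by
    intro σ
    have h1 : ∀ τ : Equiv.Perm (Fin N),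
        ∏ i, A (σ i) (τ i) = ∏ i, A i (τ (σ⁻¹ i)) := by
      intro τ
      rw [← Equiv.prod_comp σ (fun i => A i (τ (σ⁻¹ i)))]
      simp
    simp_rw [h1]
    rw [← Equiv.sum_comp (Equiv.mulRight σ)
      (fun τ => (ε σ * ε τ) * ∏ i, A i (τ (σ⁻¹ i)))]
    have h2 : ∀ ρ : Equiv.Perm (Fin N),
        (ε σ * ε ((Equiv.mulRight σ) ρ)) * ∏ i, A i (((Equiv.mulRight σ) ρ) (σ⁻¹ i)) =
          ε ρ * ∏ i, A i (ρ i) := by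
      intro ρ
      have h3 : ∀ i, ((Equiv.mulRight σ) ρ) (σ⁻¹ i) = ρ i := by
        intro i; simp [Equiv.Perm.mul_apply]
      simp only [h3]
      have h4 : ε σ * ε ((Equiv.mulRight σ) ρ) = ε ρ := by
        have h5 : (Equiv.mulRight σ) ρ = ρ * σ := rfl
        rw [h5, hεmul]
        calc ε σ * (ε ρ * ε σ) = (ε σ * ε σ) * ε ρ := by ring
          _ = ε ρ := by rw [hεsq, one_mul]
      rw [h4]
    simp_rw [h2]
    rw [← Matrix.det_transpose A, Matrix.det_apply]
    refine Finset.sum_congr rfl fun ρ _ => ?_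
    rw [Units.smul_def, zsmul_eq_mul]
    rfl
  simp_rw [step2]
  rw [Finset.sum_const, Finset.card_univ]
  simp [Fintype.card_perm, nsmul_eq_mul]

end JueAux

/-- Gram (finite-determinant) representation of the JUE largest-eigenvalue CDF: if
`p_0, …, p_{N-1}` are polynomials with `deg p_k = k`, orthonormal for the Jacobi weight
`(1-x)^a (1+x)^b` on `(-1,1)`, then for every `s ∈ [-1,1]`, `F_{N,a,b}(s) = det(I_N - G(s))`,
where `G(s)_{jk} = ∫_s^1 p_j(x) p_k(x) (1-x)^a (1+x)^b dx`. -/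
theorem jueF_eq_det_one_sub_gram (N : ℕ) (hN : 1 ≤ N) (a b : ℝ)
    (ha : -1 < a) (hb : -1 < b)
    (p : Fin N → Polynomial ℝ)
    (hdeg : ∀ k : Fin N, (p k).natDegree = (k : ℕ))
    (horth : ∀ j k : Fin N,
      (∫ x in Set.Ioo (-1 : ℝ) 1,
          (p j).eval x * (p k).eval x * ((1 - x) ^ a * (1 + x) ^ b)) =
        if j = k then 1 else 0)
    (s : ℝ) (hs : s ∈ Set.Icc (-1 : ℝ) 1) :
    jueF N a b s =
      Matrix.det
        ((1 : Matrix (Fin N) (Fin N) ℝ) -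
          Matrix.of fun j k : Fin N =>
            ∫ x in Set.Icc s 1,
              (p j).eval x * (p k).eval x * ((1 - x) ^ a * (1 + x) ^ b)) := by
  classical
  set w : ℝ → ℝ := fun x => (1 - x) ^ a * (1 + x) ^ b with hwdef
  have hw : IntegrableOn w (Set.Icc (-1 : ℝ) 1) := JueAux.weight_integrable ha hb
  have hwnn : ∀ x ∈ Set.Icc (-1:ℝ) 1, 0 ≤ w x := by
    intro x hx
    exact mul_nonneg (Real.rpow_nonneg (by linarith [hx.2]) _)
      (Real.rpow_nonneg (by linarith [hx.1]) _)
  have hpqint : ∀ j k : Fin N,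
      IntegrableOn (fun x => (p j).eval x * (p k).eval x * w x) (Set.Icc (-1:ℝ) 1) := by
    intro j k
    have := JueAux.poly_weight_integrable (a := a) (b := b) (p j * p k) hw
    simpa [Polynomial.eval_mul, hwdef] using this
  -- polynomials are nonzero
  have hne : ∀ k : Fin N, p k ≠ 0 := by
    intro k h
    have h1 := horth k k
    rw [if_pos rfl] at h1
    rw [h] at h1
    simp at h1
  set c : Fin N → ℝ := fun k => (p k).leadingCoeff with hcdef
  have hc : ∀ k, c k ≠ 0 := fun k => Polynomial.leadingCoeff_ne_zero.mpr (hne k)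
  set q : Fin N → Polynomial ℝ := fun k => Polynomial.C (c k)⁻¹ * p k with hqdef
  have hqdeg : ∀ k : Fin N, (q k).natDegree = (k : ℕ) := by
    intro k
    rw [hqdef]
    rw [Polynomial.natDegree_C_mul (inv_ne_zero (hc k))]
    exact hdeg k
  have hqmonic : ∀ k, (q k).Monic := by
    intro k
    rw [Polynomial.Monic, hqdef]
    rw [Polynomial.leadingCoeff_mul, Polynomial.leadingCoeff_C]
    exact inv_mul_cancel₀ (hc k)
  have hpq : ∀ k, p k = Polynomial.C (c k) * q k := by
    intro k
    rw [hqdef, ← mul_assoc, ← Polynomial.C_mul, mul_inv_cancel₀ (hc k), Polynomial.C_1, one_mul]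
  set L : ℝ := ∏ k, c k with hLdef
  have hL : L ≠ 0 := Finset.prod_ne_zero_iff.mpr (fun k _ => hc k)
  set g : Fin N → ℝ → ℝ := fun j t => (p j).eval t * Real.sqrt (w t) with hgdef
  -- pointwise density identity on the cube
  have key : ∀ x : Fin N → ℝ, (∀ i, x i ∈ Set.Icc (-1:ℝ) 1) →
      jueDensity N a b x = (L ^ 2)⁻¹ * (Matrix.det (Matrix.of fun i j => g j (x i))) ^ 2 := by
    intro x hx
    have hdet1 : Matrix.det (Matrix.of fun i j => g j (x i)) =
        (∏ i, Real.sqrt (w (x i))) * (L * Matrix.det (Matrix.vandermonde x)) := by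
      have e1 : (Matrix.of fun i j => g j (x i)) =
          Matrix.of fun i j =>
            (fun i => Real.sqrt (w (x i))) i * (Matrix.of fun i j => (p j).eval (x i)) i j := by
        ext i j
        simp [hgdef, mul_comm]
      rw [e1, Matrix.det_mul_column]
      congr 1
      have e2 : (Matrix.of fun i j => (p j).eval (x i)) =
          Matrix.of fun i j =>
            (fun j => c j) j * (Matrix.of fun i j => (q j).eval (x i)) i j := by
        ext i j
        rw [Matrix.of_apply, hpq j]
        simp [Polynomial.eval_mul]
      rw [e2, Matrix.det_mul_row]
      rw [← Matrix.det_eval_matrixOfPolynomials_eq_det_vandermonde x q hqdeg hqmonic]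
    have hsq : (∏ i, Real.sqrt (w (x i))) ^ 2 = ∏ i, w (x i) := by
      rw [← Finset.prod_pow]
      exact Finset.prod_congr rfl fun i _ => Real.sq_sqrt (hwnn _ (hx i))
    have hvand : (Matrix.det (Matrix.vandermonde x)) ^ 2 =
        ∏ i : Fin N, ∏ j ∈ Finset.Ioi i, (x i - x j) ^ 2 := by
      rw [Matrix.det_vandermonde, ← Finset.prod_pow]
      refine Finset.prod_congr rfl fun i _ => ?_
      rw [← Finset.prod_pow]
      exact Finset.prod_congr rfl fun j _ => by ring
    rw [hdet1, mul_pow, mul_pow, hsq, hvand, jueDensity]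
    field_simp
    ring
  -- the main box-integral formula
  have main : ∀ t : ℝ, -1 ≤ t → t ≤ 1 →
      (∫ x in {x : Fin N → ℝ | ∀ i, x i ∈ Set.Icc (-1:ℝ) t}, jueDensity N a b x) =
        (L ^ 2)⁻¹ * ((N.factorial : ℝ) *
          Matrix.det (Matrix.of fun j k : Fin N =>
            ∫ x in Set.Icc (-1:ℝ) t, (p j).eval x * (p k).eval x * w x)) := by
    intro t ht1 ht2
    set S : Set ℝ := Set.Icc (-1:ℝ) t with hSdef
    have hSsub : S ⊆ Set.Icc (-1:ℝ) 1 := Set.Icc_subset_Icc le_rfl ht2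
    have hSm : MeasurableSet S := measurableSet_Icc
    have hgg : ∀ j k : Fin N, Set.EqOn (fun x => g j x * g k x)
        (fun x => (p j).eval x * (p k).eval x * w x) S := by
      intro j k x hxS
      have hwx : 0 ≤ w x := hwnn x (hSsub hxS)
      simp only [hgdef]
      rw [show (p j).eval x * Real.sqrt (w x) * ((p k).eval x * Real.sqrt (w x)) =
        (p j).eval x * (p k).eval x * (Real.sqrt (w x) * Real.sqrt (w x)) by ring]
      rw [Real.mul_self_sqrt hwx]
    have hint : ∀ j k : Fin N, Integrable (fun x => g j x * g k x) (volume.restrict S) := by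
      intro j k
      exact IntegrableOn.congr_fun ((hpqint j k).mono_set hSsub) (hgg j k).symm hSm
    have hset : {x : Fin N → ℝ | ∀ i, x i ∈ S} = Set.pi Set.univ (fun _ => S) := by
      ext y; rw [Set.mem_setOf_eq, Set.mem_univ_pi]
    rw [hset]
    rw [setIntegral_congr_fun (MeasurableSet.univ_pi fun _ => hSm)
      (g := fun x => (L ^ 2)⁻¹ * (Matrix.det (Matrix.of fun i j => g j (x i))) ^ 2)
      (fun x hxmem => key x (fun i => hSsub (hxmem i (Set.mem_univ i))))]
    rw [integral_const_mul]
    rw [JueAux.restrict_pi_box S hSm]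
    rw [JueAux.andreief (volume.restrict S) g hint]
    have hAeq : (Matrix.of fun j k : Fin N => ∫ x, g j x * g k x ∂(volume.restrict S)) =
        Matrix.of (fun j k : Fin N =>
          ∫ x in S, (p j).eval x * (p k).eval x * w x) := by
      ext j k
      simp only [Matrix.of_apply]
      exact setIntegral_congr_fun hSm (hgg j k)
    rw [hAeq]
  -- entries over [-1,1] give the identity matrix
  have hfull : ∀ j k : Fin N,
      (∫ x in Set.Icc (-1:ℝ) 1, (p j).eval x * (p k).eval x * w x) =
        if j = k then 1 else 0 := by
    intro j k
    rw [integral_Icc_eq_integral_Ioo]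
    exact horth j k
  have hZval : jueZ N a b = (L ^ 2)⁻¹ * (N.factorial : ℝ) := by
    rw [jueZ, main 1 (by norm_num) le_rfl]
    have : (Matrix.of fun j k : Fin N =>
        ∫ x in Set.Icc (-1:ℝ) 1, (p j).eval x * (p k).eval x * w x) =
        (1 : Matrix (Fin N) (Fin N) ℝ) := by
      ext j k
      rw [Matrix.of_apply, hfull j k, Matrix.one_apply]
    rw [this, Matrix.det_one, mul_one]
  -- splitting the interval
  have hentry : ∀ j k : Fin N,
      (∫ x in Set.Icc (-1:ℝ) s, (p j).eval x * (p k).eval x * w x) =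
        (if j = k then (1:ℝ) else 0) -
          ∫ x in Set.Icc s 1, (p j).eval x * (p k).eval x * w x := by
    intro j k
    have hsplit : Set.Icc (-1:ℝ) 1 = Set.Icc (-1:ℝ) s ∪ Set.Ioc s 1 :=
      (Set.Icc_union_Ioc_eq_Icc hs.1 hs.2).symm
    have hdisj : Disjoint (Set.Icc (-1:ℝ) s) (Set.Ioc s 1) := by
      rw [Set.disjoint_left]
      rintro x ⟨_, hx2⟩ ⟨hx3, _⟩
      exact absurd hx2 (not_le.mpr hx3)
    have hadd : (∫ x in Set.Icc (-1:ℝ) 1, (p j).eval x * (p k).eval x * w x) =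
        (∫ x in Set.Icc (-1:ℝ) s, (p j).eval x * (p k).eval x * w x) +
          ∫ x in Set.Ioc s 1, (p j).eval x * (p k).eval x * w x := by
      rw [hsplit]
      exact setIntegral_union hdisj measurableSet_Ioc
        ((hpqint j k).mono_set (Set.Icc_subset_Icc le_rfl hs.2))
        ((hpqint j k).mono_set (Set.Ioc_subset_Icc_self.trans
          (Set.Icc_subset_Icc hs.1 le_rfl)))
    have hIoc : (∫ x in Set.Ioc s 1, (p j).eval x * (p k).eval x * w x) =
        ∫ x in Set.Icc s 1, (p j).eval x * (p k).eval x * w x :=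
      (integral_Icc_eq_integral_Ioc).symm
    rw [← hfull j k, hadd, hIoc]
    ring
  have hnum : (∫ x in {x : Fin N → ℝ | ∀ i, x i ∈ Set.Icc (-1:ℝ) s}, jueDensity N a b x) =
      (L ^ 2)⁻¹ * ((N.factorial : ℝ) *
        Matrix.det ((1 : Matrix (Fin N) (Fin N) ℝ) -
          Matrix.of fun j k : Fin N =>
            ∫ x in Set.Icc s 1, (p j).eval x * (p k).eval x * w x)) := by
    rw [main s hs.1 hs.2]
    have hBeq : (Matrix.of fun j k : Fin N =>
        ∫ x in Set.Icc (-1:ℝ) s, (p j).eval x * (p k).eval x * w x) =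
        (1 : Matrix (Fin N) (Fin N) ℝ) -
          Matrix.of (fun j k : Fin N =>
            ∫ x in Set.Icc s 1, (p j).eval x * (p k).eval x * w x) := by
      ext j k
      simp only [Matrix.of_apply, Matrix.sub_apply, Matrix.one_apply]
      rw [hentry j k]
    rw [hBeq]
  have hZ0 : jueZ N a b ≠ 0 := by
    rw [hZval]
    positivity
  have hden : ((L ^ 2)⁻¹ * (N.factorial : ℝ)) ≠ 0 := by
    have h2 := pow_ne_zero 2 hL
    have h3 : (N.factorial : ℝ) ≠ 0 := Nat.cast_ne_zero.mpr (Nat.factorial_ne_zero N)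
    exact mul_ne_zero (inv_ne_zero h2) h3
  rw [jueF]
  rw [hnum, hZval, div_eq_iff hden]
  simp only [hwdef]
  ring
end

section
/- Let q : ℝ → ℝ be continuous and suppose t ↦ (1 + |t|)·q(t)² is integrable on [x, ∞) for every x ∈ ℝ. Define F(x) = exp(−∫_x^∞ (t − x)·q(t)² dt). Then F is twice continuously differentiable on ℝ, with (d/dx) log F(x) = ∫_x^∞ q(t)² dt and (d²/dx²) log F(x) = −q(x)² for every x ∈ ℝ; moreover 0 < F(x) ≤ 1, F is nondecreasing, and F(x) → 1 as x → +∞. -/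
open MeasureTheory Filter

lemma tw_tail_eq (f : ℝ → ℝ) (hInt : ∀ x : ℝ, IntegrableOn f (Set.Ici x) volume) (a y : ℝ) :
    (∫ t in Set.Ici y, f t) = (∫ t in Set.Ici a, f t) - ∫ t in a..y, f t := by
  have key : ∀ u v : ℝ, u ≤ v →
      (∫ t in u..v, f t) = (∫ t in Set.Ici u, f t) - ∫ t in Set.Ici v, f t := by
    intro u v huv
    have hdiff := MeasureTheory.integral_diff (f := f) (μ := volume)
      measurableSet_Ici (hInt u) (Set.Ici_subset_Ici.mpr huv)
    rw [Set.Ici_diff_Ici] at hdiff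
    rw [intervalIntegral.integral_of_le huv, integral_Ioc_eq_integral_Ioo,
      ← integral_Ico_eq_integral_Ioo, hdiff]
  rcases le_total a y with h | h
  · rw [key a y h]; ring
  · rw [intervalIntegral.integral_symm y a, key y a h]; ring

lemma tw_tail_hasDerivAt (f : ℝ → ℝ) (hf : Continuous f)
    (hInt : ∀ x : ℝ, IntegrableOn f (Set.Ici x) volume) (x : ℝ) :
    HasDerivAt (fun y => ∫ t in Set.Ici y, f t) (-f x) x := by
  have heq : (fun y => ∫ t in Set.Ici y, f t)
      = fun y => (∫ t in Set.Ici x, f t) - ∫ t in x..y, f t := by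
    funext y; exact tw_tail_eq f hInt x y
  rw [heq]
  have hD : HasDerivAt (fun y => ∫ t in x..y, f t) (f x) x := by
    refine intervalIntegral.integral_hasDerivAt_right ?_ ?_ hf.continuousAt
    · exact (hf.intervalIntegrable x x)
    · exact hf.stronglyMeasurableAtFilter _ _
  exact ((hasDerivAt_const x (∫ t in Set.Ici x, f t)).sub hD).congr_deriv (by simp)

/-- Tracy–Widom-type integral representation: if `q : ℝ → ℝ` is continuous and
`t ↦ (1+|t|) q(t)²` is integrable on `[x,∞)` for every `x`, and
`F(x) = exp(-∫_x^∞ (t-x) q(t)² dt)`, then `F` is `C²` with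
`(log F)'(x) = ∫_x^∞ q(t)² dt` and `(log F)''(x) = -q(x)²`; moreover `0 < F(x) ≤ 1`,
`F` is nondecreasing, and `F(x) → 1` as `x → +∞`. -/
theorem tracyWidom_integral_representation (q : ℝ → ℝ) (hq : Continuous q)
    (hInt : ∀ x : ℝ, IntegrableOn (fun t => (1 + |t|) * q t ^ 2) (Set.Ici x))
    (F : ℝ → ℝ)
    (hF : ∀ x : ℝ, F x = Real.exp (-∫ t in Set.Ici x, (t - x) * q t ^ 2)) :
    ContDiff ℝ 2 F ∧
    (∀ x : ℝ, deriv (fun y => Real.log (F y)) x = ∫ t in Set.Ici x, q t ^ 2) ∧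
    (∀ x : ℝ, deriv (deriv (fun y => Real.log (F y))) x = -(q x ^ 2)) ∧
    (∀ x : ℝ, 0 < F x ∧ F x ≤ 1) ∧
    Monotone F ∧
    Tendsto F atTop (nhds 1) := by
  -- basic integrabilities
  have hInt0 : ∀ x : ℝ, IntegrableOn (fun t => q t ^ 2) (Set.Ici x) := by
    intro x
    refine Integrable.mono (hInt x) ((hq.pow 2).aestronglyMeasurable.restrict) ?_
    filter_upwards with t
    have h2 : (0:ℝ) ≤ q t ^ 2 := sq_nonneg _
    have h3 : (0:ℝ) ≤ (1 + |t|) * q t ^ 2 := by positivity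
    rw [Real.norm_eq_abs, Real.norm_eq_abs, abs_of_nonneg h2, abs_of_nonneg h3]
    nlinarith [abs_nonneg t]
  have hInt1 : ∀ x : ℝ, IntegrableOn (fun t => t * q t ^ 2) (Set.Ici x) := by
    intro x
    refine Integrable.mono (hInt x) ((continuous_id.mul (hq.pow 2)).aestronglyMeasurable.restrict) ?_
    filter_upwards with t
    have h2 : (0:ℝ) ≤ q t ^ 2 := sq_nonneg _
    have h3 : (0:ℝ) ≤ (1 + |t|) * q t ^ 2 := by positivity
    rw [Real.norm_eq_abs, Real.norm_eq_abs, abs_mul, abs_of_nonneg h2, abs_of_nonneg h3]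
    nlinarith [abs_nonneg t]
  set H : ℝ → ℝ := fun x => ∫ t in Set.Ici x, q t ^ 2 with hH
  set A : ℝ → ℝ := fun x => ∫ t in Set.Ici x, t * q t ^ 2 with hA
  set G : ℝ → ℝ := fun x => ∫ t in Set.Ici x, (t - x) * q t ^ 2 with hG
  have hGAH : ∀ x, G x = A x - x * H x := by
    intro x
    have : (∫ t in Set.Ici x, (t - x) * q t ^ 2)
        = (∫ t in Set.Ici x, t * q t ^ 2) - ∫ t in Set.Ici x, x * q t ^ 2 := by
      rw [← integral_sub (hInt1 x) ((hInt0 x).const_mul x)]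
      congr 1; funext t; ring
    show (∫ t in Set.Ici x, (t - x) * q t ^ 2) = A x - x * H x
    rw [this, MeasureTheory.integral_const_mul]
  have hHnn : ∀ x, 0 ≤ H x := fun x =>
    setIntegral_nonneg measurableSet_Ici (fun t _ => sq_nonneg _)
  have hGnn : ∀ x, 0 ≤ G x := by
    intro x
    refine setIntegral_nonneg measurableSet_Ici (fun t ht => ?_)
    have : (0:ℝ) ≤ t - x := by simpa using sub_nonneg.mpr (Set.mem_Ici.mp ht)
    positivity
  -- derivatives
  have hHD : ∀ x, HasDerivAt H (-(q x ^ 2)) x :=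
    fun x => tw_tail_hasDerivAt _ (hq.pow 2) hInt0 x
  have hAD : ∀ x, HasDerivAt A (-(x * q x ^ 2)) x :=
    fun x => tw_tail_hasDerivAt _ (continuous_id.mul (hq.pow 2)) hInt1 x
  have hGD : ∀ x, HasDerivAt G (-H x) x := by
    intro x
    have : HasDerivAt (fun y => A y - y * H y) (-(x * q x ^ 2) - (1 * H x + x * (-(q x ^ 2)))) x :=
      (hAD x).sub ((hasDerivAt_id x).mul (hHD x))
    have h2 : (fun y => A y - y * H y) = G := by funext y; rw [hGAH y]
    rw [h2] at this
    convert this using 1; ring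
  -- log F = -G
  have hlogF : (fun y => Real.log (F y)) = fun y => -G y := by
    funext y; rw [hF y, Real.log_exp]
  have hd1 : ∀ x, deriv (fun y => Real.log (F y)) x = H x := by
    intro x; rw [hlogF]; exact ((hGD x).neg.deriv).trans (neg_neg _)
  have hdH : deriv (fun y => Real.log (F y)) = H := funext hd1
  -- F = exp (-G)
  have hFeq : F = fun y => Real.exp (-G y) := by funext y; exact hF y
  have hFD : ∀ x, HasDerivAt F (Real.exp (-G x) * H x) x := by
    intro x; rw [hFeq]; simpa using (hGD x).neg.exp
  -- ContDiff
  have hHdiff : Differentiable ℝ H := fun x => (hHD x).differentiableAt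
  have hGdiff : Differentiable ℝ G := fun x => (hGD x).differentiableAt
  have hderivG : deriv G = fun x => -H x := funext fun x => (hGD x).deriv
  have hderivH : deriv H = fun x => -(q x ^ 2) := funext fun x => (hHD x).deriv
  have hG2 : ContDiff ℝ 2 G := by
    rw [show ((2:WithTop ℕ∞)) = (1 + 1 : WithTop ℕ∞) by norm_num, contDiff_succ_iff_deriv]
    refine ⟨hGdiff, by simp, ?_⟩
    rw [show ((1:WithTop ℕ∞)) = (0 + 1 : WithTop ℕ∞) by norm_num, contDiff_succ_iff_deriv]
    refine ⟨by rw [hderivG]; exact hHdiff.neg, by simp, ?_⟩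
    have : deriv (deriv G) = fun x => q x ^ 2 := by
      rw [hderivG]
      funext x
      rw [deriv.fun_neg, hderivH]; simp
    rw [this, contDiff_zero]
    exact hq.pow 2
  have hF2 : ContDiff ℝ 2 F := by
    rw [hFeq]; exact Real.contDiff_exp.comp hG2.neg
  refine ⟨hF2, hd1, ?_, ?_, ?_, ?_⟩
  · intro x
    rw [hdH]; exact (hHD x).deriv
  · intro x
    rw [hF x]
    constructor
    · exact Real.exp_pos _
    · exact Real.exp_le_one_iff.mpr (by simpa using hGnn x)
  · refine monotone_of_deriv_nonneg (fun x => (hFD x).differentiableAt) (fun x => ?_)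
    rw [(hFD x).deriv]
    exact mul_nonneg (Real.exp_pos _).le (hHnn x)
  · -- tendsto
    set g : ℝ → ℝ := fun t => (1 + |t|) * q t ^ 2 with hg
    have hgc : Continuous g := (continuous_const.add continuous_abs).mul (hq.pow 2)
    have hT : Tendsto (fun x => ∫ t in Set.Ici x, g t) atTop (nhds 0) := by
      have heq : (fun x => ∫ t in Set.Ici x, g t)
          = fun x => (∫ t in Set.Ici 0, g t) - ∫ t in (0:ℝ)..x, g t :=
        funext fun x => tw_tail_eq g hInt 0 x
      rw [heq]
      have h1 : Tendsto (fun x : ℝ => ∫ t in (0:ℝ)..x, g t) atTop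
          (nhds (∫ t in Set.Ioi (0:ℝ), g t)) :=
        MeasureTheory.intervalIntegral_tendsto_integral_Ioi 0
          ((hInt 0).mono_set Set.Ioi_subset_Ici_self) tendsto_id
      have := (tendsto_const_nhds (x := ∫ t in Set.Ici (0:ℝ), g t) (f := atTop)).sub h1
      rw [← integral_Ici_eq_integral_Ioi] at this
      simpa using this
    have hGle : ∀ x : ℝ, 0 ≤ x → G x ≤ ∫ t in Set.Ici x, g t := by
      intro x hx
      refine setIntegral_mono_on ?_ ((hInt x)) measurableSet_Ici (fun t ht => ?_)
      · -- integrability of (t-x)q² on Ici x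
        have : IntegrableOn (fun t => t * q t ^ 2 - x * q t ^ 2) (Set.Ici x) :=
          (hInt1 x).sub ((hInt0 x).const_mul x)
        refine this.congr_fun (fun t _ => by ring) measurableSet_Ici
      · have htx : x ≤ t := ht
        have : t - x ≤ 1 + |t| := by
          have : t ≤ |t| := le_abs_self t
          linarith
        exact mul_le_mul_of_nonneg_right this (sq_nonneg _)
    have hGto : Tendsto G atTop (nhds 0) := by
      refine tendsto_of_tendsto_of_tendsto_of_le_of_le' tendsto_const_nhds hT ?_ ?_
      · filter_upwards with x using hGnn x
      · filter_upwards [eventually_ge_atTop (0:ℝ)] with x hx using hGle x hx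
    rw [hFeq]
    have : Tendsto (fun y => Real.exp (-G y)) atTop (nhds (Real.exp (-0))) :=
      (Real.continuous_exp.continuousAt.tendsto).comp hGto.neg
    simpa using this
end
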